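/- arXiv:1003.3068 — 2 statements merged into one kernel-verified Lean document; each statement's English description precedes it below -/
import Mathlib

section
/- Let k > 0, let α ∈ ℝ³ be horizontal (α·e₃ = 0), let β ∈ ℂ with β ≠ 0 and α·α + β² = k², and set ζ = α + β e₃. Let A ∈ ℂ³ be tangential (A·e₃ = 0) and define C = A×e₃ + β⁻¹((e₃×A)·α) e₃ and E(x) = C exp(i ζ·x). Then ζ·C = 0 and e₃×C = A; consequently E satisfies div E ≡ 0 and curl curl E − k²E ≡ 0 on ℝ³, and e₃×E(x) = A exp(i ζ·x) for all x ∈ ℝ³. -/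
/-- Partial derivative `∂ⱼf` of a scalar field `f : ℝ³ → ℂ` in the `j`-th coordinate
direction, defined via the one-dimensional derivative. -/
noncomputable def pd (j : Fin 3) (f : (Fin 3 → ℝ) → ℂ) (x : Fin 3 → ℝ) : ℂ :=
  deriv (fun t : ℝ => f (Function.update x j t)) (x j)

/-- `curl E = (∂₂E₃ − ∂₃E₂, ∂₃E₁ − ∂₁E₃, ∂₁E₂ − ∂₂E₁)`. -/
noncomputable def curl3 (E : (Fin 3 → ℝ) → Fin 3 → ℂ) (x : Fin 3 → ℝ) : Fin 3 → ℂ :=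
  ![pd 1 (fun y => E y 2) x - pd 2 (fun y => E y 1) x,
    pd 2 (fun y => E y 0) x - pd 0 (fun y => E y 2) x,
    pd 0 (fun y => E y 1) x - pd 1 (fun y => E y 0) x]

/-- `div E = ∂₁E₁ + ∂₂E₂ + ∂₃E₃`. -/
noncomputable def div3 (E : (Fin 3 → ℝ) → Fin 3 → ℂ) (x : Fin 3 → ℝ) : ℂ :=
  pd 0 (fun y => E y 0) x + pd 1 (fun y => E y 1) x + pd 2 (fun y => E y 2) x

/-- Bilinear dot product on `ℂ³` (no conjugation). -/
def cdot (a b : Fin 3 → ℂ) : ℂ := a 0 * b 0 + a 1 * b 1 + a 2 * b 2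

/-- Bilinearly extended cross product on `ℂ³`. -/
def ccross (a b : Fin 3 → ℂ) : Fin 3 → ℂ :=
  ![a 1 * b 2 - a 2 * b 1, a 2 * b 0 - a 0 * b 2, a 0 * b 1 - a 1 * b 0]

/-- `e₃ = (0,0,1)` in `ℂ³`. -/
def e3c : Fin 3 → ℂ := ![0, 0, 1]

/-! `E` is a plane wave, so `∂ⱼ` acts on it as multiplication by `i ζⱼ`: hence
`div E = i (ζ·C) e^{iζ·x}` and, by the expansion `ζ × (ζ × C) = (ζ·C) ζ − (ζ·ζ) C`,
`curl curl E = ((ζ·ζ) C − (ζ·C) ζ) e^{iζ·x}`. Everything thus reduces to `ζ·C = 0`, where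
`α·(A × e₃)` cancels against `β β⁻¹ (e₃ × A)·α`, and to the dispersion relation
`ζ·ζ = α·α + β² = k²`; the trace identity is `e₃ × (A × e₃) = A` for tangential `A`. -/

open Matrix

lemma cdot_eq_dotProduct (a b : Fin 3 → ℂ) : cdot a b = a ⬝ᵥ b := by
  simp [cdot, dotProduct, Fin.sum_univ_three]

lemma ccross_eq_crossProduct (a b : Fin 3 → ℂ) : ccross a b = a ⨯₃ b :=
  (cross_apply a b).symm

lemma cdot_ofReal_update (ζ : Fin 3 → ℂ) (x : Fin 3 → ℝ) (j : Fin 3) (t : ℝ) :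
    cdot ζ (fun i => (Function.update x j t i : ℂ)) =
      cdot ζ (fun i => (x i : ℂ)) + ζ j * (t - x j) := by
  fin_cases j <;> simp [cdot] <;> ring

lemma hasDerivAt_cexp_affine (c a b : ℂ) (t₀ t : ℝ) :
    HasDerivAt (fun s : ℝ => c * Complex.exp (Complex.I * (b + a * (s - t₀))))
      (Complex.I * a * (c * Complex.exp (Complex.I * (b + a * (t - t₀))))) t := by
  have hphase :
      HasDerivAt (fun s : ℝ => Complex.I * (b + a * ((s : ℂ) - t₀))) (Complex.I * a) t := by
    simpa using ((((hasDerivAt_id (t : ℂ)).sub_const (t₀ : ℂ)).const_mul a).const_add b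
      |>.const_mul Complex.I).comp_ofReal
  exact (hphase.cexp.const_mul c).congr_deriv (by ring)

noncomputable def planeWave (C ζ : Fin 3 → ℂ) (x : Fin 3 → ℝ) : Fin 3 → ℂ :=
  fun j => C j * Complex.exp (Complex.I * cdot ζ (fun i => (x i : ℂ)))

lemma pd_planeWave (C ζ : Fin 3 → ℂ) (j l : Fin 3) (x : Fin 3 → ℝ) :
    pd j (fun y => planeWave C ζ y l) x = Complex.I * ζ j * planeWave C ζ x l := by
  simp only [pd, planeWave, cdot_ofReal_update]
  simpa using (hasDerivAt_cexp_affine (C l) (ζ j) (cdot ζ (fun i => (x i : ℂ))) (x j) (x j)).deriv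

lemma div3_planeWave (C ζ : Fin 3 → ℂ) (x : Fin 3 → ℝ) :
    div3 (planeWave C ζ) x =
      Complex.I * cdot ζ C * Complex.exp (Complex.I * cdot ζ (fun i => (x i : ℂ))) := by
  simp only [div3, pd_planeWave]
  simp only [planeWave, cdot]
  ring

lemma ccross_planeWave (a C ζ : Fin 3 → ℂ) (x : Fin 3 → ℝ) :
    ccross a (planeWave C ζ x) = planeWave (ccross a C) ζ x := by
  ext j
  fin_cases j <;>
    simp only [ccross, planeWave, Fin.zero_eta, Fin.mk_one, Fin.reduceFinMk, cons_val] <;> ring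

lemma curl3_planeWave (C ζ : Fin 3 → ℂ) :
    curl3 (planeWave C ζ) = planeWave (Complex.I • ccross ζ C) ζ := by
  ext x j
  fin_cases j <;> simp only [curl3, pd_planeWave] <;>
    simp only [planeWave, ccross, Fin.zero_eta, Fin.mk_one, Fin.reduceFinMk, cons_val,
      Pi.smul_apply, smul_eq_mul] <;> ring

lemma curl3_curl3_planeWave (C ζ : Fin 3 → ℂ) :
    curl3 (curl3 (planeWave C ζ)) = planeWave (cdot ζ ζ • C - cdot ζ C • ζ) ζ := by
  rw [curl3_planeWave, curl3_planeWave]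
  simp only [ccross_eq_crossProduct, cdot_eq_dotProduct, map_smul,
    cross_cross_eq_smul_sub_smul', smul_smul, Complex.I_mul_I, neg_one_smul, neg_sub]

lemma cdot_self_add_mul_e3c {a : Fin 3 → ℂ} (ha : a 2 = 0) (β : ℂ) :
    cdot (fun j => a j + β * e3c j) (fun j => a j + β * e3c j) = cdot a a + β ^ 2 := by
  simp only [cdot, e3c, ha, Fin.isValue, cons_val, mul_zero, mul_one, add_zero, zero_add]
  ring

lemma cdot_add_mul_e3c_amplitude_eq_zero {a : Fin 3 → ℂ} (ha : a 2 = 0) {β : ℂ} (hβ : β ≠ 0)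
    (A : Fin 3 → ℂ) :
    cdot (fun j => a j + β * e3c j)
      (fun j => ccross A e3c j + β⁻¹ * cdot (ccross e3c A) a * e3c j) = 0 := by
  simp only [cdot, ccross, e3c, ha, Fin.isValue, cons_val]
  field_simp
  ring

lemma ccross_e3c_add_mul_e3c {A : Fin 3 → ℂ} (hA : A 2 = 0) (s : ℂ) :
    ccross e3c (fun j => ccross A e3c j + s * e3c j) = A := by
  ext j
  fin_cases j <;> simp [ccross, e3c, hA]

theorem rayleigh_mode_construction_general (k : ℝ)
    (α : Fin 3 → ℝ) (hα : α 2 = 0) (β : ℂ) (hβ : β ≠ 0)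
    (hdisp : cdot (fun j => (α j : ℂ)) (fun j => (α j : ℂ)) + β^2 = (k : ℂ)^2)
    (A : Fin 3 → ℂ) (hA : A 2 = 0)
    (ζ : Fin 3 → ℂ) (hζ : ζ = fun j => (α j : ℂ) + β * e3c j)
    (C : Fin 3 → ℂ)
    (hC : C = fun j => ccross A e3c j + β⁻¹ * cdot (ccross e3c A) (fun i => (α i : ℂ)) * e3c j)
    (E : (Fin 3 → ℝ) → Fin 3 → ℂ)
    (hE : E = fun x j => C j * Complex.exp (Complex.I * cdot ζ (fun i => (x i : ℂ)))) :
    cdot ζ C = 0 ∧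
    ccross e3c C = A ∧
    (∀ x : Fin 3 → ℝ, div3 E x = 0) ∧
    (∀ (x : Fin 3 → ℝ) (j : Fin 3), curl3 (curl3 E) x j - (k : ℂ)^2 * E x j = 0) ∧
    (∀ x : Fin 3 → ℝ,
      ccross e3c (E x) = fun j => A j * Complex.exp (Complex.I * cdot ζ (fun i => (x i : ℂ)))) := by
  obtain rfl : E = planeWave C ζ := hE
  have hα' : (α 2 : ℂ) = 0 := by simp [hα]
  have hζC : cdot ζ C = 0 := hζ ▸ hC ▸ cdot_add_mul_e3c_amplitude_eq_zero hα' hβ A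
  have hζζ : cdot ζ ζ = (k : ℂ) ^ 2 := by rw [hζ, cdot_self_add_mul_e3c hα', hdisp]
  have he₃C : ccross e3c C = A := hC ▸ ccross_e3c_add_mul_e3c hA _
  refine ⟨hζC, he₃C, fun x => ?_, fun x j => ?_, fun x => ?_⟩
  · rw [div3_planeWave, hζC, mul_zero, zero_mul]
  · rw [curl3_curl3_planeWave, hζC, hζζ, zero_smul, sub_zero]
    simp only [planeWave, Pi.smul_apply, smul_eq_mul]
    ring
  · rw [ccross_planeWave, he₃C]
    rfl

/-- Construction of an outgoing Rayleigh mode with prescribed rotated tangential trace: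
for horizontal `α`, `β ≠ 0` with `α·α + β² = k²`, `ζ = α + βe₃`, tangential `A`, and
`C = A×e₃ + β⁻¹((e₃×A)·α)e₃`, `E(x) = C exp(iζ·x)`, one has `ζ·C = 0`, `e₃×C = A`,
`div E ≡ 0`, `curl curl E − k²E ≡ 0`, and `e₃×E(x) = A exp(iζ·x)`. -/
theorem rayleigh_mode_construction (k : ℝ) (hk : 0 < k)
    (α : Fin 3 → ℝ) (hα : α 2 = 0) (β : ℂ) (hβ : β ≠ 0)
    (hdisp : cdot (fun j => (α j : ℂ)) (fun j => (α j : ℂ)) + β^2 = (k : ℂ)^2)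
    (A : Fin 3 → ℂ) (hA : A 2 = 0)
    (ζ : Fin 3 → ℂ) (hζ : ζ = fun j => (α j : ℂ) + β * e3c j)
    (C : Fin 3 → ℂ)
    (hC : C = fun j => ccross A e3c j + β⁻¹ * cdot (ccross e3c A) (fun i => (α i : ℂ)) * e3c j)
    (E : (Fin 3 → ℝ) → Fin 3 → ℂ)
    (hE : E = fun x j => C j * Complex.exp (Complex.I * cdot ζ (fun i => (x i : ℂ)))) :
    cdot ζ C = 0 ∧
    ccross e3c C = A ∧
    (∀ x : Fin 3 → ℝ, div3 E x = 0) ∧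
    (∀ (x : Fin 3 → ℝ) (j : Fin 3), curl3 (curl3 E) x j - (k : ℂ)^2 * E x j = 0) ∧
    (∀ x : Fin 3 → ℝ,
      ccross e3c (E x) = fun j => A j * Complex.exp (Complex.I * cdot ζ (fun i => (x i : ℂ)))) :=
  rayleigh_mode_construction_general k α hα β hβ hdisp A hA ζ hζ C hC E hE
end

section
/- Let k > 0, let α ∈ ℝ³ be horizontal (α·e₃ = 0), let β ∈ ℂ with β ≠ 0 and α·α + β² = k², and set ζ = α + β e₃. Let Ẽ ∈ ℂ³ be tangential (Ẽ·e₃ = 0), define C = Ẽ×e₃ − β⁻¹(α·(Ẽ×e₃)) e₃ and E(x) = C exp(i ζ·x). Then ζ·C = 0, e₃×E(x) = Ẽ exp(i ζ·x), and the tangential component of curl E satisfies the Dirichlet-to-Neumann symbol identity (e₃ × curl E(x)) × e₃ = −(1/(iβ)) [ k² Ẽ − (α·Ẽ) α ] exp(i ζ·x) for all x ∈ ℝ³. -/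
/-! On a plane wave `C exp(iζ·x)` the curl acts as multiplication by `iζ ×`, so everything reduces
to vector algebra in `ℂ³`: `e₃ × C = Ẽ` because `Ẽ` is tangential, the `e₃`-component of `C` is
chosen exactly so that `ζ·C = 0`, and the tangential part of `β (ζ × C)` is
`(α·α + β²) Ẽ − (α·Ẽ) α`, which is `k² Ẽ − (α·Ẽ) α` by the dispersion relation. -/

lemma pd_const_mul_cexp_dot (ζ : Fin 3 → ℂ) (c : ℂ) (j : Fin 3) (x : Fin 3 → ℝ) :
    pd j (fun y => c * Complex.exp (Complex.I * cdot ζ (fun i => (y i : ℂ)))) x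
      = Complex.I * ζ j * c * Complex.exp (Complex.I * cdot ζ (fun i => (x i : ℂ))) := by
  set r := cdot ζ (fun i => (x i : ℂ)) - ζ j * x j
  have hdot_update (t : ℝ) :
      cdot ζ (fun i => (Function.update x j t i : ℂ)) = ζ j * t + r := by
    fin_cases j <;>
      simp only [r, cdot, Function.update, Fin.isValue, Fin.zero_eta, Fin.mk_one, Fin.reduceFinMk,
        Fin.reduceEq, one_ne_zero, zero_ne_one, ↓reduceDIte] <;>
      ring
  have hderiv : HasDerivAt (fun t : ℝ => c * Complex.exp (Complex.I * (ζ j * t + r)))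
      (c * (Complex.exp (Complex.I * (ζ j * x j + r)) * (Complex.I * (ζ j * 1)))) (x j) :=
    ((((hasDerivAt_id (x j)).ofReal_comp.const_mul (ζ j)).add_const r).const_mul
      Complex.I).cexp.const_mul c
  have hval : ζ j * (x j : ℂ) + r = cdot ζ (fun i => (x i : ℂ)) := by ring
  simp only [pd, hdot_update, hderiv.deriv, hval]
  ring

theorem curl3_planeWave_s4 (C ζ : Fin 3 → ℂ) (x : Fin 3 → ℝ) :
    curl3 (fun y j => C j * Complex.exp (Complex.I * cdot ζ (fun i => (y i : ℂ)))) x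
      = fun j =>
        Complex.I * ccross ζ C j * Complex.exp (Complex.I * cdot ζ (fun i => (x i : ℂ))) := by
  funext j
  fin_cases j <;>
    simp only [curl3, pd_const_mul_cexp_dot, ccross, Fin.isValue, Fin.zero_eta, Fin.mk_one,
      Fin.reduceFinMk, Matrix.cons_val_zero, Matrix.cons_val_one, Matrix.cons_val] <;>
    ring

section
variable (a b : Fin 3 → ℂ) (c : ℂ)

theorem ccross_mul_const_right : ccross a (fun j => b j * c) = fun j => ccross a b j * c := by
  funext j
  fin_cases j <;>
    simp only [ccross, Fin.isValue, Fin.zero_eta, Fin.mk_one, Fin.reduceFinMk,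
      Matrix.cons_val_zero, Matrix.cons_val_one, Matrix.cons_val] <;>
    ring

theorem ccross_mul_const_left : ccross (fun j => a j * c) b = fun j => ccross a b j * c := by
  funext j
  fin_cases j <;>
    simp only [ccross, Fin.isValue, Fin.zero_eta, Fin.mk_one, Fin.reduceFinMk,
      Matrix.cons_val_zero, Matrix.cons_val_one, Matrix.cons_val] <;>
    ring

end

def waveVector (α : Fin 3 → ℂ) (β : ℂ) : Fin 3 → ℂ := fun j => α j + β * e3c j

noncomputable def tangentialLift (α : Fin 3 → ℂ) (β : ℂ) (Et : Fin 3 → ℂ) : Fin 3 → ℂ :=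
  fun j => ccross Et e3c j - β⁻¹ * cdot α (ccross Et e3c) * e3c j

theorem ccross_ccross_e3c_e3c (v : Fin 3 → ℂ) : ccross (ccross e3c v) e3c = ![v 0, v 1, 0] := by
  funext j; fin_cases j <;> simp [ccross, e3c]

section
variable {α : Fin 3 → ℂ} {β : ℂ} {Et : Fin 3 → ℂ}

theorem cdot_waveVector_tangentialLift (hα : α 2 = 0) (hβ : β ≠ 0) :
    cdot (waveVector α β) (tangentialLift α β Et) = 0 := by
  simp only [cdot, waveVector, tangentialLift, ccross, e3c, hα, Fin.isValue, Matrix.cons_val_zero,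
    Matrix.cons_val_one, Matrix.cons_val]
  field_simp
  ring

theorem e3c_ccross_tangentialLift (hEt : Et 2 = 0) : ccross e3c (tangentialLift α β Et) = Et := by
  funext j; fin_cases j <;> simp [ccross, e3c, tangentialLift, hEt]

theorem tangential_I_ccross_waveVector_tangentialLift {K : ℂ} (hα : α 2 = 0) (hβ : β ≠ 0)
    (hEt : Et 2 = 0) (hdisp : cdot α α + β ^ 2 = K) :
    ccross (ccross e3c fun j => Complex.I * ccross (waveVector α β) (tangentialLift α β Et) j) e3c
      = fun j => -(1 / (Complex.I * β)) * (K * Et j - cdot α Et * α j) := by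
  rw [ccross_ccross_e3c_e3c, ← hdisp]
  funext j
  fin_cases j <;>
    simp only [one_div, mul_inv_rev, Complex.inv_I, neg_mul, ccross, cdot, waveVector,
      tangentialLift, e3c, hα, hEt, Fin.isValue, Fin.zero_eta, Fin.mk_one, Fin.reduceFinMk,
      Matrix.cons_val_zero, Matrix.cons_val_one, Matrix.cons_val] <;>
    field_simp <;> ring
end

theorem dirichlet_to_neumann_symbol_identity_general (k : ℝ)
    (α : Fin 3 → ℝ) (hα : α 2 = 0) (β : ℂ) (hβ : β ≠ 0)
    (hdisp : cdot (fun j => (α j : ℂ)) (fun j => (α j : ℂ)) + β^2 = (k : ℂ)^2)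
    (Et : Fin 3 → ℂ) (hEt : Et 2 = 0)
    (ζ : Fin 3 → ℂ) (hζ : ζ = fun j => (α j : ℂ) + β * e3c j)
    (C : Fin 3 → ℂ)
    (hC : C = fun j => ccross Et e3c j - β⁻¹ * cdot (fun i => (α i : ℂ)) (ccross Et e3c) * e3c j)
    (E : (Fin 3 → ℝ) → Fin 3 → ℂ)
    (hE : E = fun x j => C j * Complex.exp (Complex.I * cdot ζ (fun i => (x i : ℂ)))) :
    cdot ζ C = 0 ∧
    (∀ x : Fin 3 → ℝ,
      ccross e3c (E x) = fun j => Et j * Complex.exp (Complex.I * cdot ζ (fun i => (x i : ℂ)))) ∧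
    (∀ x : Fin 3 → ℝ,
      ccross (ccross e3c (curl3 E x)) e3c = fun j =>
        -(1 / (Complex.I * β)) *
          ((k : ℂ)^2 * Et j - cdot (fun i => (α i : ℂ)) Et * (α j : ℂ)) *
          Complex.exp (Complex.I * cdot ζ (fun i => (x i : ℂ)))) := by
  have hα_ofReal : (fun j => (α j : ℂ)) 2 = 0 := by simp [hα]
  replace hζ : ζ = waveVector (fun j => (α j : ℂ)) β := hζ
  replace hC : C = tangentialLift (fun j => (α j : ℂ)) β Et := hC
  subst hE
  refine ⟨?_, fun x => ?_, fun x => ?_⟩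
  · rw [hζ, hC]
    exact cdot_waveVector_tangentialLift hα_ofReal hβ
  · rw [ccross_mul_const_right, hC, e3c_ccross_tangentialLift hEt]
  · rw [curl3_planeWave_s4, ccross_mul_const_right, ccross_mul_const_left, hζ, hC,
      tangential_I_ccross_waveVector_tangentialLift hα_ofReal hβ hEt hdisp]

/-- The single-mode computation behind the explicit representation of the transparent
boundary (Dirichlet-to-Neumann) operator: for `ζ = α + βe₃` with horizontal `α`, `β ≠ 0`,
`α·α + β² = k²`, tangential `Ẽ`, `C = Ẽ×e₃ − β⁻¹(α·(Ẽ×e₃))e₃`, `E(x) = C exp(iζ·x)`,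
one has `ζ·C = 0`, `e₃×E = Ẽ exp(iζ·x)`, and
`(e₃×curl E)×e₃ = −(1/(iβ))[k²Ẽ − (α·Ẽ)α] exp(iζ·x)`. -/
theorem dirichlet_to_neumann_symbol_identity (k : ℝ) (hk : 0 < k)
    (α : Fin 3 → ℝ) (hα : α 2 = 0) (β : ℂ) (hβ : β ≠ 0)
    (hdisp : cdot (fun j => (α j : ℂ)) (fun j => (α j : ℂ)) + β^2 = (k : ℂ)^2)
    (Et : Fin 3 → ℂ) (hEt : Et 2 = 0)
    (ζ : Fin 3 → ℂ) (hζ : ζ = fun j => (α j : ℂ) + β * e3c j)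
    (C : Fin 3 → ℂ)
    (hC : C = fun j => ccross Et e3c j - β⁻¹ * cdot (fun i => (α i : ℂ)) (ccross Et e3c) * e3c j)
    (E : (Fin 3 → ℝ) → Fin 3 → ℂ)
    (hE : E = fun x j => C j * Complex.exp (Complex.I * cdot ζ (fun i => (x i : ℂ)))) :
    cdot ζ C = 0 ∧
    (∀ x : Fin 3 → ℝ,
      ccross e3c (E x) = fun j => Et j * Complex.exp (Complex.I * cdot ζ (fun i => (x i : ℂ)))) ∧
    (∀ x : Fin 3 → ℝ,
      ccross (ccross e3c (curl3 E x)) e3c = fun j =>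
        -(1 / (Complex.I * β)) *
          ((k : ℂ)^2 * Et j - cdot (fun i => (α i : ℂ)) Et * (α j : ℂ)) *
          Complex.exp (Complex.I * cdot ζ (fun i => (x i : ℂ)))) :=
  dirichlet_to_neumann_symbol_identity_general k α hα β hβ hdisp Et hEt ζ hζ C hC E hE
end
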